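/- In any right triangle ABC with ∠C = 90°, the 2-trisectors from A and B are both equal in length to the hypotenuse AB. -/
import Mathlib

open EuclideanGeometry Real

noncomputable section

/-- The Euclidean plane. -/
abbrev Pt : Type := EuclideanSpace ℝ (Fin 2)

section Aux

open ComplexConjugate
open scoped RealInnerProductSpace

variable [Fact (Module.finrank ℝ (EuclideanSpace ℝ (Fin 2)) = 2)]
    [Module.Oriented ℝ (EuclideanSpace ℝ (Fin 2)) (Fin 2)]

lemma oangle_vec_aux (o : Orientation ℝ (EuclideanSpace ℝ (Fin 2)) (Fin 2))
    (u v : EuclideanSpace ℝ (Fin 2)) (hu : u ≠ 0) (hv : v ≠ 0)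
    (hw : (2 : ℝ) • u - v ≠ 0) (hin : ⟪u, v⟫ = ‖u‖ ^ 2) :
    o.oangle v ((2 : ℝ) • u - v) = (2 : ℤ) • o.oangle v u := by
  have hk : o.kahler u ((2 : ℝ) • u - v) = o.kahler v u := by
    have h1 : o.kahler u ((2 : ℝ) • u - v)
        = (2 : ℝ) • o.kahler u u - o.kahler u v := by
      simp [map_sub, map_smul]
    rw [h1, o.kahler_apply_self, Orientation.kahler_apply_apply,
      Orientation.kahler_apply_apply, o.areaForm_swap v u]
    have h2 : ⟪v, u⟫ = ‖u‖ ^ 2 := by rw [real_inner_comm]; exact hin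
    rw [h2, hin]
    simp only [Complex.real_smul, smul_eq_mul]
    push_cast
    ring
  have h2 : o.oangle u ((2 : ℝ) • u - v) = o.oangle v u := by
    unfold Orientation.oangle
    rw [hk]
  rw [← o.oangle_add hv hu hw, h2, two_zsmul]

lemma trisector_aux (P Q R X : Pt)
    (h : AffineIndependent ℝ ![P, Q, R])
    (hR : ∠ P R Q = π / 2)
    (hX : X ∈ affineSpan ℝ ({Q, R} : Set Pt))
    (ha : ∡ Q P X = (2 : ℤ) • ∡ Q P R) :
    dist P X = dist P Q := by
  have hPs : P ∉ affineSpan ℝ ({Q, R} : Set Pt) := by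
    intro hP
    exact (affineIndependent_iff_not_collinear_set.1 h)
      (collinear_insert_of_mem_affineSpan_pair hP)
  have hPQ : Q ≠ P := by
    rintro rfl
    exact hPs (mem_affineSpan ℝ (by simp))
  have hPR : R ≠ P := by
    rintro rfl
    exact hPs (mem_affineSpan ℝ (by simp))
  set u : EuclideanSpace ℝ (Fin 2) := R -ᵥ P with hu_def
  set v : EuclideanSpace ℝ (Fin 2) := Q -ᵥ P with hv_def
  have hu : u ≠ 0 := vsub_ne_zero.2 hPR
  have hv : v ≠ 0 := vsub_ne_zero.2 hPQ
  have hin : ⟪u, v⟫ = ‖u‖ ^ 2 := by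
    have h0 : ⟪P -ᵥ R, Q -ᵥ R⟫ = 0 :=
      (InnerProductGeometry.inner_eq_zero_iff_angle_eq_pi_div_two _ _).2 hR
    have h1 : P -ᵥ R = -u := by simp [hu_def]
    have h2 : Q -ᵥ R = v - u := by simp [hu_def, hv_def, vsub_sub_vsub_cancel_right]
    rw [h1, h2, inner_neg_left, inner_sub_right, real_inner_self_eq_norm_sq] at h0
    linarith
  set Y : Pt := AffineMap.lineMap Q R (2 : ℝ) with hY_def
  have hYs : Y ∈ affineSpan ℝ ({Q, R} : Set Pt) := AffineMap.lineMap_mem_affineSpan_pair _ _ _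
  have hYP : Y ≠ P := by
    rintro rfl
    exact hPs hYs
  have hYv : Y -ᵥ P = (2 : ℝ) • u - v := by
    rw [hY_def, AffineMap.lineMap_apply, vadd_vsub_assoc, hu_def, hv_def,
      show R -ᵥ Q = (R -ᵥ P) - (Q -ᵥ P) from (vsub_sub_vsub_cancel_right R Q P).symm]
    module
  have hw : (2 : ℝ) • u - v ≠ 0 := hYv ▸ vsub_ne_zero.2 hYP
  have hangleY : ∡ Q P Y = (2 : ℤ) • ∡ Q P R := by
    show o.oangle (Q -ᵥ P) (Y -ᵥ P) = (2 : ℤ) • o.oangle (Q -ᵥ P) (R -ᵥ P)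
    rw [hYv]
    exact oangle_vec_aux _ u v hu hv hw hin
  have hXP : X ≠ P := by
    rintro rfl
    exact hPs hX
  have hzero : ∡ X P Y = 0 := by
    rw [← EuclideanGeometry.oangle_add hXP hPQ hYP, hangleY,
      EuclideanGeometry.oangle_rev, ha, neg_add_cancel]
  have hcol : Collinear ℝ ({X, P, Y} : Set Pt) :=
    EuclideanGeometry.oangle_eq_zero_or_eq_pi_iff_collinear.1 (Or.inl hzero)
  have hXY : X = Y := by
    by_contra hne
    have hP : P ∈ affineSpan ℝ ({X, Y} : Set Pt) :=
      hcol.mem_affineSpan_of_mem_of_ne (by simp) (by simp) (by simp) hne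
    have hle : affineSpan ℝ ({X, Y} : Set Pt) ≤ affineSpan ℝ ({Q, R} : Set Pt) := by
      apply affineSpan_le.2
      rintro x (rfl | rfl)
      · exact hX
      · exact hYs
    exact hPs (hle hP)
  have hnorm : ‖(2 : ℝ) • u - v‖ = ‖v‖ := by
    have hsq : ‖(2 : ℝ) • u - v‖ ^ 2 = ‖v‖ ^ 2 := by
      rw [← real_inner_self_eq_norm_sq, ← real_inner_self_eq_norm_sq]
      rw [inner_sub_sub_self]
      simp only [inner_smul_left, inner_smul_right, RCLike.conj_to_real,
        real_inner_self_eq_norm_sq]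
      have h2 : ⟪v, u⟫ = ‖u‖ ^ 2 := by rw [real_inner_comm]; exact hin
      rw [h2, hin]
      ring
    have h3 := congrArg Real.sqrt hsq
    rwa [Real.sqrt_sq (norm_nonneg _), Real.sqrt_sq (norm_nonneg _)] at h3
  calc dist P X = dist P Y := by rw [hXY]
    _ = dist P Q := by
        rw [dist_comm P Y, dist_comm P Q, dist_eq_norm_vsub (EuclideanSpace ℝ (Fin 2)),
          dist_eq_norm_vsub (EuclideanSpace ℝ (Fin 2)), hYv, hnorm]

end Aux

/-- In a right triangle `ABC` with right angle at `C`, the `2`-trisectors from `A`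
and `B` both have length equal to the hypotenuse `AB`. -/
theorem two_trisectors_of_right_triangle
    [Fact (Module.finrank ℝ (EuclideanSpace ℝ (Fin 2)) = 2)]
    [Module.Oriented ℝ (EuclideanSpace ℝ (Fin 2)) (Fin 2)]
    (A B C A₁ B₁ : Pt)
    (hABC : AffineIndependent ℝ ![A, B, C])
    (hC : ∠ A C B = π / 2)
    (hA₁ : A₁ ∈ affineSpan ℝ ({B, C} : Set Pt))
    (hB₁ : B₁ ∈ affineSpan ℝ ({A, C} : Set Pt))
    (htriA : ∡ B A A₁ = (2 : ℤ) • ∡ B A C)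
    (htriB : ∡ A B B₁ = (2 : ℤ) • ∡ A B C) :
    dist A A₁ = dist A B ∧ dist B B₁ = dist A B := by
  have hBAC : AffineIndependent ℝ ![B, A, C] := by
    rw [affineIndependent_iff_not_collinear_set] at hABC ⊢
    rwa [Set.insert_comm]
  refine ⟨trisector_aux A B C A₁ hABC hC hA₁ htriA, ?_⟩
  rw [dist_comm A B]
  exact trisector_aux B A C B₁ hBAC (by rw [EuclideanGeometry.angle_comm]; exact hC) hB₁ htriB
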